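/- Let n ≥ 1, let k ≥ 1 be odd, and let f₁, …, f_r : (Fin n → ZMod 2) → (Fin n → ZMod 2) be arbitrary round functions. For every initial state (L₁⁰, …, L_k⁰, R⁰) of the n:kn-UFN2 and every r ≥ 0, the XOR of all k+1 blocks after r rounds satisfies L₁^r ⊕ ⋯ ⊕ L_k^r ⊕ R^r = (L₁⁰ ⊕ ⋯ ⊕ L_k⁰ ⊕ R⁰) ⊕ f₁(R⁰) ⊕ f₂(R¹) ⊕ ⋯ ⊕ f_r(R^{r−1}), where R^{i−1} denotes the last block of the state after i−1 rounds. -/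

import Mathlib

/-- An `n`-bit block, i.e. a bit string of length `n`. -/
abbrev Blk (n : ℕ) : Type := Fin n → ZMod 2

/-- The state of a `(k+1)`-block Feistel network: `k+1` blocks of `n` bits each. -/
abbrev St (n k : ℕ) : Type := Fin (k + 1) → Blk n

/-- One round of the `n:kn`-UFN2 with round function `f : Blk n → Blk n`:
`(L₁, …, L_k, R) ↦ (R, L₁ ⊕ f R, …, L_k ⊕ f R)`.
State coordinates `0, …, k-1` are `L₁, …, L_k` and coordinate `k` is `R`. -/
def ufn2Round {n k : ℕ} (f : Blk n → Blk n) (s : St n k) : St n k :=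
  fun i =>
    if h : (i : ℕ) = 0 then s (Fin.last k)
    else s ⟨(i : ℕ) - 1, by have := i.isLt; omega⟩ + f (s (Fin.last k))

/-- The `r`-round `n:kn`-UFN2 with round functions `f 0, …, f (r-1)`, applied with `f 0`
first. -/
def ufn2Run {n k : ℕ} : (r : ℕ) → (Fin r → (Blk n → Blk n)) → St n k → St n k
  | 0, _, s => s
  | r + 1, f, s => ufn2Round (f (Fin.last r)) (ufn2Run r (fun i => f i.castSucc) s)

/-! Each round moves `R` to the front and adds `f(R)` to each of the `k` other blocks, so the
XOR of all blocks changes by `k • f(R)`, which is `f(R)` when `k` is odd. -/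

theorem Odd.nsmul_eq_self_of_zmod_two {M : Type*} [AddCommMonoid M] [Module (ZMod 2) M] {k : ℕ}
    (hk : Odd k) (v : M) : k • v = v := by
  rw [← Nat.cast_smul_eq_nsmul (ZMod 2), hk.natCast_zmod_two, one_smul]

section

variable {n k : ℕ} (f : Blk n → Blk n) (s : St n k)

@[simp]
theorem ufn2Round_zero : ufn2Round f s 0 = s (Fin.last k) := rfl

@[simp]
theorem ufn2Round_succ (i : Fin k) :
    ufn2Round f s i.succ = s i.castSucc + f (s (Fin.last k)) := rfl

theorem sum_ufn2Round : ∑ i, ufn2Round f s i = ∑ i, s i + k • f (s (Fin.last k)) := by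
  rw [Fin.sum_univ_succ, Fin.sum_univ_castSucc s]
  simp only [ufn2Round_zero, ufn2Round_succ, Finset.sum_add_distrib, Finset.sum_const,
    Finset.card_univ, Fintype.card_fin]
  abel

end

/-- If `k` is odd, then for any `r` rounds of the `n:kn`-UFN2 with arbitrary
round functions, the XOR of all `k+1` blocks after `r` rounds satisfies
`L₁^r ⊕ ⋯ ⊕ L_k^r ⊕ R^r = (L₁⁰ ⊕ ⋯ ⊕ L_k⁰ ⊕ R⁰) ⊕ f₁(R⁰) ⊕ f₂(R¹) ⊕ ⋯ ⊕ f_r(R^{r−1})`,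
where `R^{i}` is the last block of the state after `i` rounds. -/
theorem ufn2_odd_block_xor_identity (n k r : ℕ) (hko : Odd k)
    (f : Fin r → (Blk n → Blk n)) (x : St n k) :
    ∑ i : Fin (k + 1), ufn2Run r f x i =
      (∑ i : Fin (k + 1), x i) +
        ∑ t : Fin r,
          f t (ufn2Run (t : ℕ) (fun u => f (Fin.castLE (by have := t.isLt; omega) u)) x
            (Fin.last k)) := by
  induction r with
  | zero => simp [ufn2Run]
  | succ r ih =>
    rw [ufn2Run, sum_ufn2Round, hko.nsmul_eq_self_of_zmod_two, ih, add_assoc,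
      Fin.sum_univ_castSucc (fun t : Fin (r + 1) => _)]
    -- the round functions of each prefix agree up to `Fin.castLE` / `Fin.castSucc` coercions
    rfl
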